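/- The triple (H(X,Ω), Δ_λ, ε) is a coassociative counital coalgebra: (Δ_λ ⊗ id) ∘ Δ_λ = (id ⊗ Δ_λ) ∘ Δ_λ, and under the canonical identifications k ⊗ H(X,Ω) ≅ H(X,Ω) ≅ H(X,Ω) ⊗ k one has (ε ⊗ id) ∘ Δ_λ = id = (id ⊗ ε) ∘ Δ_λ. -/

import Mathlib

open scoped TensorProduct

universe u v w u'

/-- Decorated planar rooted trees: internal vertices are decorated by `Ω`,
leaves are decorated by `X ⊔ Ω` (a leaf decorated by `ω : Ω` is `node ω []`). -/
inductive PTree (X : Type u) (Ω : Type v) : Type (max u v)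
  | leafX : X → PTree X Ω
  | node : Ω → List (PTree X Ω) → PTree X Ω

namespace Moerdijk

variable {X : Type u} {Ω : Type v}

/-- `ℱ(X,Ω)`: decorated planar rooted forests, i.e. the free monoid on decorated
planar rooted trees under concatenation. -/
abbrev RForest (X : Type u) (Ω : Type v) := FreeMonoid (PTree X Ω)

/-- The single-vertex forest `•ₓ` for `x ∈ X`. -/
def leafF (x : X) : RForest X Ω := FreeMonoid.of (PTree.leafX x)

/-- Grafting of a forest onto a new common root decorated by `ω`. -/
def graft (ω : Ω) (F : RForest X Ω) : RForest X Ω :=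
  FreeMonoid.of (PTree.node ω (FreeMonoid.toList F))

variable (k : Type w) [CommRing k]

/-- `H(X,Ω)`: the free `k`-module on decorated planar rooted forests, a unital
associative algebra under the concatenation product. -/
abbrev RAlg (X : Type u) (Ω : Type v) := MonoidAlgebra k (RForest X Ω)

/-- The basis element of `H(X,Ω)` corresponding to a forest `F`. -/
noncomputable def ofF (F : RForest X Ω) : RAlg k X Ω := MonoidAlgebra.of k (RForest X Ω) F

/-- The grafting operator `B⁺_ω : H(X,Ω) → H(X,Ω)` as a linear map. -/
noncomputable def Bplus (ω : Ω) : RAlg k X Ω →ₗ[k] RAlg k X Ω :=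
  (MonoidAlgebra.coeffLinearEquiv k).symm.toLinearMap ∘ₗ Finsupp.lmapDomain k k (graft ω) ∘ₗ
    (MonoidAlgebra.coeffLinearEquiv k).toLinearMap

/-- The value of the coproduct `Δ_λ` on a decorated planar rooted tree:
`Δ_λ(•ₓ) = •ₓ ⊗ 1 + 1 ⊗ •ₓ + λ •ₓ ⊗ •ₓ` and
`Δ_λ(B⁺_ω(F)) = (B⁺_ω ⊗ id)Δ_λ(F) + (id ⊗ B⁺_ω)Δ_λ(F)`. -/
noncomputable def DeltaT (lam : k) : PTree X Ω → (RAlg k X Ω ⊗[k] RAlg k X Ω)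
  | .leafX x =>
      ofF k (leafF x) ⊗ₜ[k] 1 + 1 ⊗ₜ[k] ofF k (leafF x)
        + lam • (ofF k (leafF x) ⊗ₜ[k] ofF k (leafF x))
  | .node ω ts =>
      ((TensorProduct.map (Bplus k ω) LinearMap.id
        + TensorProduct.map LinearMap.id (Bplus k ω) :
          (RAlg k X Ω ⊗[k] RAlg k X Ω) →ₗ[k] (RAlg k X Ω ⊗[k] RAlg k X Ω)))
        ((ts.attach.map fun t => DeltaT lam t.1).prod)
decreasing_by
  have := List.sizeOf_lt_of_mem t.2
  simp only [PTree.node.sizeOf_spec]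
  omega

/-- The value of the coproduct `Δ_λ` on a forest: `Δ_λ(T₁⋯Tₘ) = Δ_λ(T₁)⋯Δ_λ(Tₘ)`. -/
noncomputable def DeltaF (lam : k) (F : RForest X Ω) : RAlg k X Ω ⊗[k] RAlg k X Ω :=
  ((FreeMonoid.toList F).map (DeltaT k lam)).prod

/-- The coproduct `Δ_λ : H(X,Ω) → H(X,Ω) ⊗ H(X,Ω)`. -/
noncomputable def Delta (lam : k) : RAlg k X Ω →ₗ[k] (RAlg k X Ω ⊗[k] RAlg k X Ω) :=
  (Finsupp.lsum k fun F => LinearMap.toSpanSingleton k _ (DeltaF k lam F)) ∘ₗ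
    (MonoidAlgebra.coeffLinearEquiv k).toLinearMap

/-- The counit `ε : H(X,Ω) → k`, sending the empty forest to `1` and every
nonempty forest to `0`. -/
noncomputable def eps : RAlg k X Ω →ₗ[k] k :=
  (Finsupp.lsum k fun F => LinearMap.toSpanSingleton k k
    (if (FreeMonoid.toList F).isEmpty then (1 : k) else 0)) ∘ₗ
    (MonoidAlgebra.coeffLinearEquiv k).toLinearMap

/-!
Both `Δ_λ` and `ε` are multiplicative on forests, hence algebra homomorphisms, so every map in
the three identities is an algebra homomorphism out of `H(X,Ω)`. Since forests are built from
the leaves `•ₓ` by concatenation and grafting, two such homomorphisms agree once they agree on the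
leaves and intertwine every `B⁺_ω` with the same operator. The recursion defining `Δ_λ` says exactly that
`Δ_λ` intertwines `B⁺_ω` with the Kronecker sum `B⁺_ω ⊗ 1 + 1 ⊗ B⁺_ω`, while `ε ∘ B⁺_ω = 0`.
Hence both sides of coassociativity intertwine `B⁺_ω` with `B⁺_ω ⊗ 1 ⊗ 1 + 1 ⊗ B⁺_ω ⊗ 1 +
1 ⊗ 1 ⊗ B⁺_ω`, both sides of each counit identity intertwine `B⁺_ω` with itself, and on the
leaves the identities are a direct computation.
-/

section KroneckerSum

open TensorProduct LinearMap

variable {R M N P M' N' : Type*} [CommSemiring R]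
  [AddCommMonoid M] [AddCommMonoid N] [AddCommMonoid P] [AddCommMonoid M'] [AddCommMonoid N']
  [Module R M] [Module R N] [Module R P] [Module R M'] [Module R N']

def kroneckerSum (S : M →ₗ[R] M) (T : N →ₗ[R] N) : M ⊗[R] N →ₗ[R] M ⊗[R] N :=
  S.rTensor N + T.lTensor M

lemma kroneckerSum_tmul (S : M →ₗ[R] M) (T : N →ₗ[R] N) (m : M) (n : N) :
    kroneckerSum S T (m ⊗ₜ n) = S m ⊗ₜ n + m ⊗ₜ T n := rfl

lemma semiconj_map_kroneckerSum {f : M →ₗ[R] M'} {g : N →ₗ[R] N'} {S : M →ₗ[R] M}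
    {S' : M' →ₗ[R] M'} {T : N →ₗ[R] N} {T' : N' →ₗ[R] N'}
    (hf : Function.Semiconj f S S') (hg : Function.Semiconj g T T') :
    Function.Semiconj (map f g) (kroneckerSum S T) (kroneckerSum S' T') := by
  suffices map f g ∘ₗ kroneckerSum S T = kroneckerSum S' T' ∘ₗ map f g from
    LinearMap.congr_fun this
  refine ext' fun m n => ?_
  simp only [comp_apply, kroneckerSum_tmul, map_add, map_tmul, hf.eq, hg.eq]

lemma semiconj_algHomMap_kroneckerSum {A B C D : Type*} [Semiring A] [Semiring B] [Semiring C]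
    [Semiring D] [Algebra R A] [Algebra R B] [Algebra R C] [Algebra R D]
    {f : A →ₐ[R] C} {g : B →ₐ[R] D} {S : A →ₗ[R] A} {S' : C →ₗ[R] C}
    {T : B →ₗ[R] B} {T' : D →ₗ[R] D} (hf : Function.Semiconj f S S')
    (hg : Function.Semiconj g T T') :
    Function.Semiconj (Algebra.TensorProduct.map f g) (kroneckerSum S T) (kroneckerSum S' T') :=
  semiconj_map_kroneckerSum (f := f.toLinearMap) (g := g.toLinearMap) hf hg

lemma semiconj_assoc_kroneckerSum (S : M →ₗ[R] M) (T : N →ₗ[R] N) (U : P →ₗ[R] P) :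
    Function.Semiconj (TensorProduct.assoc R M N P) (kroneckerSum (kroneckerSum S T) U)
      (kroneckerSum S (kroneckerSum T U)) := by
  suffices (TensorProduct.assoc R M N P).toLinearMap ∘ₗ kroneckerSum (kroneckerSum S T) U =
      kroneckerSum S (kroneckerSum T U) ∘ₗ (TensorProduct.assoc R M N P).toLinearMap from
    LinearMap.congr_fun this
  refine ext_threefold fun m n p => ?_
  simp only [comp_apply, LinearEquiv.coe_coe, kroneckerSum_tmul, add_tmul, map_add, assoc_tmul,
    tmul_add, add_assoc]

lemma semiconj_lid_kroneckerSum_zero (T : N →ₗ[R] N) :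
    Function.Semiconj (TensorProduct.lid R N) (kroneckerSum 0 T) T := by
  suffices (TensorProduct.lid R N).toLinearMap ∘ₗ kroneckerSum 0 T =
      T ∘ₗ (TensorProduct.lid R N).toLinearMap from LinearMap.congr_fun this
  refine ext' fun r n => ?_
  simp only [comp_apply, LinearEquiv.coe_coe, kroneckerSum_tmul, LinearMap.zero_apply, zero_tmul,
    zero_add, lid_tmul, map_smul]

lemma semiconj_rid_kroneckerSum_zero (S : M →ₗ[R] M) :
    Function.Semiconj (TensorProduct.rid R M) (kroneckerSum S 0) S := by
  suffices (TensorProduct.rid R M).toLinearMap ∘ₗ kroneckerSum S 0 =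
      S ∘ₗ (TensorProduct.rid R M).toLinearMap from LinearMap.congr_fun this
  refine ext' fun m r => ?_
  simp only [comp_apply, LinearEquiv.coe_coe, kroneckerSum_tmul, LinearMap.zero_apply, tmul_zero,
    add_zero, rid_tmul, map_smul]

end KroneckerSum

lemma ofF_ofList (ts : List (PTree X Ω)) :
    ofF k (FreeMonoid.ofList ts) = (ts.map fun t => ofF k (FreeMonoid.of t)).prod := by
  induction ts with
  | nil => exact map_one (MonoidAlgebra.of k (RForest X Ω))
  | cons t ts ih =>
    rw [FreeMonoid.ofList_cons, List.map_cons, List.prod_cons, ← ih]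
    exact map_mul (MonoidAlgebra.of k (RForest X Ω)) _ _

lemma Bplus_ofF (ω : Ω) (F : RForest X Ω) : Bplus k ω (ofF k F) = ofF k (graft ω F) :=
  MonoidAlgebra.mapDomainLinearMap_single _ _ _

lemma ofF_node (ω : Ω) (ts : List (PTree X Ω)) :
    ofF k (FreeMonoid.of (.node ω ts)) = Bplus k ω (ofF k (FreeMonoid.ofList ts)) := by
  rw [Bplus_ofF, graft, FreeMonoid.toList_ofList]

section Induction

variable {k} {S : Subalgebra k (RAlg k X Ω)}

theorem ofF_of_mem (hleaf : ∀ x, ofF k (leafF x) ∈ S) (hB : ∀ ω, ∀ z ∈ S, Bplus k ω z ∈ S) :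
    ∀ t : PTree X Ω, ofF k (FreeMonoid.of t) ∈ S
  | .leafX x => hleaf x
  | .node ω ts => by
    rw [ofF_node, ofF_ofList]
    refine hB ω _ (Subalgebra.list_prod_mem _ fun z hz => ?_)
    obtain ⟨t, ht, rfl⟩ := List.mem_map.1 hz
    exact ofF_of_mem hleaf hB t

theorem ofF_mem (hleaf : ∀ x, ofF k (leafF x) ∈ S) (hB : ∀ ω, ∀ z ∈ S, Bplus k ω z ∈ S)
    (F : RForest X Ω) : ofF k F ∈ S := by
  rw [← FreeMonoid.ofList_toList F, ofF_ofList]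
  refine Subalgebra.list_prod_mem _ fun z hz => ?_
  obtain ⟨t, -, rfl⟩ := List.mem_map.1 hz
  exact ofF_of_mem hleaf hB t

end Induction

theorem algHom_ext_of_semiconj_Bplus {B : Type*} [Semiring B] [Algebra k B]
    {f g : RAlg k X Ω →ₐ[k] B} (L : Ω → B → B)
    (hf : ∀ ω, Function.Semiconj f (Bplus k ω) (L ω))
    (hg : ∀ ω, Function.Semiconj g (Bplus k ω) (L ω))
    (hleaf : ∀ x, f (ofF k (leafF x)) = g (ofF k (leafF x))) : f = g := by
  have hB : ∀ ω, ∀ z ∈ AlgHom.equalizer f g, Bplus k ω z ∈ AlgHom.equalizer f g :=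
    fun ω z (hz : f z = g z) => show f _ = g _ by rw [(hf ω).eq, (hg ω).eq, hz]
  refine MonoidAlgebra.algHom_ext (fun F => ?_) (Subsingleton.elim _ _)
  exact ofF_mem (S := AlgHom.equalizer f g) hleaf hB F

noncomputable def deltaAlgHom (lam : k) : RAlg k X Ω →ₐ[k] RAlg k X Ω ⊗[k] RAlg k X Ω :=
  MonoidAlgebra.lift k _ (RForest X Ω) (FreeMonoid.lift (DeltaT k lam))

noncomputable def epsAlgHom : RAlg k X Ω →ₐ[k] k :=
  MonoidAlgebra.lift k k (RForest X Ω) (FreeMonoid.lift fun _ => 0)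

lemma deltaAlgHom_ofF (lam : k) (F : RForest X Ω) :
    deltaAlgHom k lam (ofF k F) = DeltaF k lam F := by
  simp [deltaAlgHom, ofF, FreeMonoid.lift_apply, DeltaF]

lemma epsAlgHom_ofF (F : RForest X Ω) :
    epsAlgHom k (ofF k F) = if (FreeMonoid.toList F).isEmpty then (1 : k) else 0 := by
  simp only [epsAlgHom, ofF, MonoidAlgebra.lift_of, FreeMonoid.lift_apply]
  cases FreeMonoid.toList F <;> simp

lemma Delta_eq_deltaAlgHom (lam : k) :
    Delta k lam = (deltaAlgHom (X := X) (Ω := Ω) k lam).toLinearMap := by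
  refine MonoidAlgebra.lhom_ext' fun F => LinearMap.ext_ring (S := k) ?_
  change Delta k lam (ofF k F) = deltaAlgHom k lam (ofF k F)
  rw [deltaAlgHom_ofF]
  exact (Finsupp.lsum_single k _ F 1).trans (one_smul _ _)

lemma eps_eq_epsAlgHom : eps k = (epsAlgHom (X := X) (Ω := Ω) k).toLinearMap := by
  refine MonoidAlgebra.lhom_ext' fun F => LinearMap.ext_ring (S := k) ?_
  change eps k (ofF k F) = epsAlgHom k (ofF k F)
  rw [epsAlgHom_ofF]
  exact (Finsupp.lsum_single k _ F 1).trans (one_smul _ _)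

lemma semiconj_deltaAlgHom_Bplus (lam : k) (ω : Ω) :
    Function.Semiconj (deltaAlgHom (X := X) k lam) (Bplus k ω)
      (kroneckerSum (Bplus k ω) (Bplus k ω)) := by
  suffices (deltaAlgHom (X := X) (Ω := Ω) k lam).toLinearMap ∘ₗ Bplus k ω =
      kroneckerSum (Bplus k ω) (Bplus k ω) ∘ₗ (deltaAlgHom k lam).toLinearMap from
    LinearMap.congr_fun this
  refine MonoidAlgebra.lhom_ext' fun F => LinearMap.ext_ring (S := k) ?_
  change deltaAlgHom k lam (Bplus k ω (ofF k F)) =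
    kroneckerSum (Bplus k ω) (Bplus k ω) (deltaAlgHom k lam (ofF k F))
  rw [Bplus_ofF, deltaAlgHom_ofF, deltaAlgHom_ofF, graft, DeltaF, FreeMonoid.toList_of,
    List.map_singleton, List.prod_singleton, DeltaT, List.attach_map_val]
  rfl

lemma semiconj_epsAlgHom_Bplus (ω : Ω) :
    Function.Semiconj (epsAlgHom (X := X) k) (Bplus k ω) (0 : k →ₗ[k] k) := by
  intro z
  suffices (epsAlgHom (X := X) k).toLinearMap ∘ₗ Bplus k ω = 0 from LinearMap.congr_fun this z
  refine MonoidAlgebra.lhom_ext' fun F => LinearMap.ext_ring (S := k) ?_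
  change epsAlgHom k (Bplus k ω (ofF (X := X) k F)) = 0
  rw [Bplus_ofF, epsAlgHom_ofF, graft, FreeMonoid.toList_of]
  rfl

lemma deltaAlgHom_leafF (lam : k) (x : X) :
    deltaAlgHom k lam (ofF (Ω := Ω) k (leafF x)) =
      ofF k (leafF x) ⊗ₜ[k] 1 + 1 ⊗ₜ[k] ofF k (leafF x)
        + lam • (ofF k (leafF x) ⊗ₜ[k] ofF k (leafF x)) := by
  rw [deltaAlgHom_ofF, DeltaF, leafF, FreeMonoid.toList_of, List.map_singleton,
    List.prod_singleton, DeltaT]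
  rfl

lemma epsAlgHom_leafF (x : X) : epsAlgHom k (ofF (Ω := Ω) k (leafF x)) = 0 := by
  rw [epsAlgHom_ofF, leafF, FreeMonoid.toList_of]
  rfl

theorem deltaAlgHom_coassoc (lam : k) :
    (Algebra.TensorProduct.assoc k k k (RAlg k X Ω) (RAlg k X Ω) (RAlg k X Ω)).toAlgHom.comp
        ((Algebra.TensorProduct.map (deltaAlgHom (X := X) (Ω := Ω) k lam) (AlgHom.id k _)).comp
          (deltaAlgHom k lam)) =
      (Algebra.TensorProduct.map (AlgHom.id k _) (deltaAlgHom (X := X) (Ω := Ω) k lam)).comp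
        (deltaAlgHom k lam) := by
  have hΔ := semiconj_deltaAlgHom_Bplus (X := X) (Ω := Ω) k lam
  refine algHom_ext_of_semiconj_Bplus k
    (fun ω => kroneckerSum (Bplus k ω) (kroneckerSum (Bplus k ω) (Bplus k ω)))
    (fun ω => ?_) (fun ω => ?_) (fun x => ?_)
  · rw [AlgHom.coe_comp, AlgHom.coe_comp]
    exact ((hΔ ω).trans (semiconj_algHomMap_kroneckerSum (hΔ ω) (fun _ => rfl))).trans
      (semiconj_assoc_kroneckerSum _ _ _)
  · rw [AlgHom.coe_comp]
    exact (hΔ ω).trans (semiconj_algHomMap_kroneckerSum (fun _ => rfl) (hΔ ω))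
  · simp only [AlgHom.comp_apply, deltaAlgHom_leafF, map_add, map_smul, AlgHom.coe_id, id_eq,
      Algebra.TensorProduct.map_tmul, map_one, Algebra.TensorProduct.one_def,
      AlgEquiv.coe_toAlgHom, Algebra.TensorProduct.assoc_tmul, TensorProduct.add_tmul,
      TensorProduct.tmul_add, TensorProduct.tmul_smul, ← TensorProduct.smul_tmul']
    module

theorem deltaAlgHom_counit_left (lam : k) :
    (Algebra.TensorProduct.lid k (RAlg k X Ω)).toAlgHom.comp
        ((Algebra.TensorProduct.map (epsAlgHom k) (AlgHom.id k _)).comp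
          (deltaAlgHom (X := X) (Ω := Ω) k lam)) = AlgHom.id k _ := by
  have hΔ := semiconj_deltaAlgHom_Bplus (X := X) (Ω := Ω) k lam
  refine algHom_ext_of_semiconj_Bplus k (fun ω => Bplus k ω)
    (fun ω => ?_) (fun ω _ => rfl) (fun x => ?_)
  · rw [AlgHom.coe_comp, AlgHom.coe_comp]
    exact ((hΔ ω).trans (semiconj_algHomMap_kroneckerSum (semiconj_epsAlgHom_Bplus k ω)
      (fun _ => rfl))).trans (semiconj_lid_kroneckerSum_zero _)
  · simp only [AlgHom.comp_apply, deltaAlgHom_leafF, map_add, map_smul, AlgHom.coe_id, id_eq,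
      Algebra.TensorProduct.map_tmul, epsAlgHom_leafF, map_one, AlgEquiv.coe_toAlgHom,
      Algebra.TensorProduct.lid_tmul, zero_smul, one_smul, smul_zero, add_zero, zero_add]

theorem deltaAlgHom_counit_right (lam : k) :
    (Algebra.TensorProduct.rid k k (RAlg k X Ω)).toAlgHom.comp
        ((Algebra.TensorProduct.map (AlgHom.id k _) (epsAlgHom k)).comp
          (deltaAlgHom (X := X) (Ω := Ω) k lam)) = AlgHom.id k _ := by
  have hΔ := semiconj_deltaAlgHom_Bplus (X := X) (Ω := Ω) k lam
  refine algHom_ext_of_semiconj_Bplus k (fun ω => Bplus k ω)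
    (fun ω => ?_) (fun ω _ => rfl) (fun x => ?_)
  · rw [AlgHom.coe_comp, AlgHom.coe_comp]
    exact ((hΔ ω).trans (semiconj_algHomMap_kroneckerSum (fun _ => rfl)
      (semiconj_epsAlgHom_Bplus k ω))).trans (semiconj_rid_kroneckerSum_zero _)
  · simp only [AlgHom.comp_apply, deltaAlgHom_leafF, map_add, map_smul, AlgHom.coe_id, id_eq,
      Algebra.TensorProduct.map_tmul, epsAlgHom_leafF, map_one, AlgEquiv.coe_toAlgHom,
      Algebra.TensorProduct.rid_tmul, zero_smul, one_smul, smul_zero, add_zero]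

theorem coalgebra_structure (lam : k) :
    ((TensorProduct.assoc k (RAlg k X Ω) (RAlg k X Ω) (RAlg k X Ω)).toLinearMap ∘ₗ
        TensorProduct.map (Delta k lam) LinearMap.id ∘ₗ Delta k lam
      = TensorProduct.map LinearMap.id (Delta k lam) ∘ₗ Delta k lam) ∧
    ((TensorProduct.lid k (RAlg k X Ω)).toLinearMap ∘ₗ
        TensorProduct.map (eps k) LinearMap.id ∘ₗ Delta k lam
      = (LinearMap.id : RAlg k X Ω →ₗ[k] RAlg k X Ω)) ∧
    ((TensorProduct.rid k (RAlg k X Ω)).toLinearMap ∘ₗ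
        TensorProduct.map LinearMap.id (eps k) ∘ₗ Delta k lam
      = (LinearMap.id : RAlg k X Ω →ₗ[k] RAlg k X Ω)) := by
  rw [Delta_eq_deltaAlgHom, eps_eq_epsAlgHom]
  exact ⟨congrArg AlgHom.toLinearMap (deltaAlgHom_coassoc k lam),
    congrArg AlgHom.toLinearMap (deltaAlgHom_counit_left k lam),
    congrArg AlgHom.toLinearMap (deltaAlgHom_counit_right k lam)⟩

end Moerdijk
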